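/- arXiv:1504.04689 — 3 statements merged into one kernel-verified Lean document; each statement's English description precedes it below -/
import Mathlib

section
/- Let λ be a self-conjugate partition of n and A an n×n matrix whose entries pairwise anticommute. Then imm^{*λ} A^σ = imm^{*λ} A for every σ ∈ S_n, where A^σ = (a_{σ(i)σ(j)}). -/
open Equiv Finset Matrix
open scoped BigOperators Classical Kronecker

namespace Paper

/-- The `i`-th largest part (0-indexed) of a partition of `n` (0 if `i` exceeds the length). -/
def partAt {n : ℕ} (l : n.Partition) (i : ℕ) : ℕ :=
  ((l.parts.sort (· ≤ ·)).reverse).getD i 0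

/-- The `i`-th part (0-indexed) of the conjugate partition: the number of parts `> i`. -/
def conjPartAt {n : ℕ} (l : n.Partition) (i : ℕ) : ℕ :=
  (l.parts.filter (fun p => i < p)).card

/-- A partition is self-conjugate when it equals its conjugate. -/
def IsSelfConj {n : ℕ} (l : n.Partition) : Prop :=
  ∀ i, partAt l i = conjPartAt l i

/-- The rank of a partition: the length of the main diagonal of its Young diagram. -/
def rank {n : ℕ} (l : n.Partition) : ℕ :=
  ((Finset.range n).filter (fun i => i < partAt l i)).card

/-- `m(λ) = (n - rank λ)/2`. -/
def mval {n : ℕ} (l : n.Partition) : ℕ := (n - rank l) / 2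

/-- The list of diagonal hook lengths `2 λ_k - (2k+1)` (0-indexed `k`), in decreasing order. -/
def hookParts {n : ℕ} (l : n.Partition) : List ℕ :=
  (List.range (rank l)).map (fun k => 2 * partAt l k - (2 * k + 1))

/-- A partition is strict-odd if its parts are distinct and all odd. -/
def IsStrictOdd {n : ℕ} (l : n.Partition) : Prop :=
  l.parts.Nodup ∧ ∀ p ∈ l.parts, Odd p

/-- The full cycle type of a permutation of `Fin n`, including fixed points as parts `1`. -/
def fullCycleType {n : ℕ} (σ : Equiv.Perm (Fin n)) : Multiset ℕ :=
  σ.cycleType + Multiset.replicate (n - σ.cycleType.sum) 1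

/-- `σ` has cycle type `l`. -/
def HasType {n : ℕ} (σ : Equiv.Perm (Fin n)) (l : n.Partition) : Prop :=
  fullCycleType σ = l.parts

/-- Power sum polynomial `p_k` in `n` variables. -/
noncomputable def pSum (n k : ℕ) : MvPolynomial (Fin n) ℂ :=
  ∑ i : Fin n, MvPolynomial.X i ^ k

/-- Vandermonde product `∏_{i<j} (x_i - x_j)`. -/
noncomputable def vdm (n : ℕ) : MvPolynomial (Fin n) ℂ :=
  ∏ i : Fin n, ∏ j ∈ Finset.Ioi i, (MvPolynomial.X i - MvPolynomial.X j)

/-- The irreducible character `χ^λ` of the symmetric group `S_n`, defined via the Frobenius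
character formula: `χ^λ(σ)` is the coefficient of `x^{λ+δ}` in `(∏_{i<j}(x_i-x_j)) p_μ(x)`,
where `μ` is the cycle type of `σ`. -/
noncomputable def frobChar {n : ℕ} (l : n.Partition) (σ : Equiv.Perm (Fin n)) : ℂ :=
  MvPolynomial.coeff
    (Finsupp.equivFunOnFinite.symm (fun j : Fin n => partAt l j + (n - 1 - (j : ℕ))))
    (vdm n * ((fullCycleType σ).map (pSum n)).prod)

/-- Consecutive blocks of given lengths, starting at a given offset. -/
def blocksAux : List ℕ → ℕ → List (List ℕ)
  | [], _ => []
  | (k :: t), o => ((List.range k).map (o + ·)) :: blocksAux t (o + k)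

/-- The canonical permutation of `Fin n` with cycle lengths given by the list `L`:
each cycle is formed by a consecutive block of indices. -/
def permOfList (n : ℕ) (L : List ℕ) : Equiv.Perm (Fin n) :=
  ((blocksAux L 0).map
    (fun b => (b.filterMap (fun m => if h : m < n then some (⟨m, h⟩ : Fin n) else none)).formPerm)).prod

/-- Sort a multiset of naturals into a decreasing list. -/
def sortDesc (s : Multiset ℕ) : List ℕ := (s.sort (· ≤ ·)).reverse

/-- The class `C^+_μ`-style conjugacy class of `σ` under even permutations. -/
def altClass {n : ℕ} (σ : Equiv.Perm (Fin n)) : Set (Equiv.Perm (Fin n)) :=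
  {π | ∃ τ : Equiv.Perm (Fin n), Equiv.Perm.sign τ = 1 ∧ π = τ * σ * τ⁻¹}

/-- The twisted character `χ^{*λ}` attached to a self-conjugate partition `λ`:
it vanishes off the conjugacy class of cycle type `h(λ)`, and on `σ = τ σ_μ τ⁻¹`
(with `σ_μ` the canonical permutation of type `μ = h(λ)`) it takes the value
`sgn(τ) i^{m(λ)} √(μ_1 ⋯ μ_r)`. -/
noncomputable def twChar {n : ℕ} (l : n.Partition) (σ : Equiv.Perm (Fin n)) : ℂ :=
  if h : ∃ τ : Equiv.Perm (Fin n), σ = τ * permOfList n (hookParts l) * τ⁻¹ then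
    ((Equiv.Perm.sign h.choose : ℤ) : ℂ) * Complex.I ^ mval l *
      ((Real.sqrt ((hookParts l).prod) : ℝ) : ℂ)
  else 0

variable {R : Type*} [Ring R] [Algebra ℂ R]

/-- Row immanant `Σ_τ χ(τ) a_{1τ(1)} ⋯ a_{nτ(n)}` (ordered product). -/
noncomputable def rowImm {k : ℕ} (χ : Equiv.Perm (Fin k) → ℂ)
    (A : Matrix (Fin k) (Fin k) R) : R :=
  ∑ τ : Equiv.Perm (Fin k), χ τ • (List.ofFn (fun i => A i (τ i))).prod

/-- Column immanant `Σ_σ χ(σ⁻¹) a_{σ(1)1} ⋯ a_{σ(n)n}` (ordered product). -/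
noncomputable def colImm {k : ℕ} (χ : Equiv.Perm (Fin k) → ℂ)
    (A : Matrix (Fin k) (Fin k) R) : R :=
  ∑ σ : Equiv.Perm (Fin k), χ σ⁻¹ • (List.ofFn (fun i => A (σ i) i)).prod

/-- `imm_k A = (1/k!) Σ_{I} imm A_{II}`. -/
noncomputable def immSum {k : ℕ} {ι : Type*} [Fintype ι] (χ : Equiv.Perm (Fin k) → ℂ)
    (A : Matrix ι ι R) : R :=
  ((Nat.factorial k : ℂ))⁻¹ • ∑ I : Fin k → ι, rowImm χ (A.submatrix I I)

/-- The entries of a matrix pairwise commute. -/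
def PairwiseCommute {ι κ : Type*} (A : Matrix ι κ R) : Prop :=
  ∀ i j k l, Commute (A i j) (A k l)

/-- The entries of a matrix pairwise anticommute. -/
def PairwiseAnticommute {ι κ : Type*} (A : Matrix ι κ R) : Prop :=
  ∀ i j k l, A i j * A k l = - (A k l * A i j)

/-- Complete homogeneous symmetric polynomial `h_k` evaluated at `x : Fin N → ℂ`. -/
noncomputable def hfun (N k : ℕ) (x : Fin N → ℂ) : ℂ :=
  ∑ m : Sym (Fin N) k, ((m : Multiset (Fin N)).map x).prod

/-- The Schur polynomial `s_λ` evaluated at `x`, via the Jacobi–Trudi formula. -/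
noncomputable def schur {n N : ℕ} (l : n.Partition) (x : Fin N → ℂ) : ℂ :=
  Matrix.det (Matrix.of fun i j : Fin n =>
    if (i : ℕ) ≤ partAt l i + (j : ℕ) then hfun N (partAt l i + (j : ℕ) - (i : ℕ)) x else 0)

/-- The self-conjugate hook partition `(k+1, 1^k)` of `2k+1`. -/
def hookPartition (k : ℕ) : Nat.Partition (2 * k + 1) where
  parts := (k + 1) ::ₘ Multiset.replicate k 1
  parts_pos := by
    intro p hp
    rcases Multiset.mem_cons.mp hp with h | h
    · omega
    · have := Multiset.eq_of_mem_replicate h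
      omega
  parts_sum := by
    simp [Multiset.sum_replicate]
    omega

end Paper

section AntiComm
variable {R : Type*} [Ring R] {ι : Type*} [DecidableEq ι]

omit [Ring R] in
lemma map_congr_swap_not_mem (f : ι → R) {x y : ι} {t : List ι} (hx : x ∉ t) (hy : y ∉ t) :
    t.map (f ∘ Equiv.swap x y) = t.map f := by
  apply List.map_congr_left
  intro a ha
  have h1 : a ≠ x := fun h => hx (h ▸ ha)
  have h2 : a ≠ y := fun h => hy (h ▸ ha)
  simp [Function.comp, Equiv.swap_apply_of_ne_of_ne h1 h2]

lemma anticomm_replace (f : ι → R) (hf : ∀ i j, f i * f j = -(f j * f i)) (x y : ι) :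
    ∀ (t : List ι), t.Nodup → y ∈ t → x ∉ t →
      f y * (t.map (f ∘ Equiv.swap x y)).prod = -(f x * (t.map f).prod) := by
  intro t
  induction t with
  | nil => intro _ h; simp at h
  | cons a t ih =>
    intro hnd hy hx
    have hxa : x ∉ t := fun h => hx (List.mem_cons_of_mem _ h)
    have hax : a ≠ x := fun h => hx (h ▸ List.mem_cons_self)
    by_cases hay : a = y
    · subst hay
      have hyt : a ∉ t := (List.nodup_cons.mp hnd).1
      have hsw : (Equiv.swap x a) a = x := Equiv.swap_apply_right x a
      simp only [List.map_cons, List.prod_cons, Function.comp_apply, hsw,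
        map_congr_swap_not_mem f hxa hyt]
      rw [← mul_assoc, ← mul_assoc, hf a x, neg_mul]
    · have hyt : y ∈ t := by
        rcases List.mem_cons.mp hy with h | h
        · exact absurd h.symm hay
        · exact h
      have hnd' : t.Nodup := (List.nodup_cons.mp hnd).2
      have hsa : (Equiv.swap x y) a = a :=
        Equiv.swap_apply_of_ne_of_ne hax hay
      simp only [List.map_cons, List.prod_cons, Function.comp_apply, hsa]
      have key := ih hnd' hyt hxa
      calc f y * (f a * (t.map (f ∘ Equiv.swap x y)).prod)
          = (f y * f a) * (t.map (f ∘ Equiv.swap x y)).prod := by rw [mul_assoc]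
        _ = -(f a * f y) * (t.map (f ∘ Equiv.swap x y)).prod := by rw [hf y a]
        _ = -(f a * (f y * (t.map (f ∘ Equiv.swap x y)).prod)) := by
              rw [neg_mul, mul_assoc]
        _ = -(f a * (-(f x * (t.map f).prod))) := by rw [key]
        _ = f a * (f x * (t.map f).prod) := by rw [mul_neg, neg_neg]
        _ = (f a * f x) * (t.map f).prod := by rw [mul_assoc]
        _ = -(f x * f a) * (t.map f).prod := by rw [hf a x]
        _ = -(f x * (f a * (t.map f).prod)) := by rw [neg_mul, mul_assoc]

lemma anticomm_swap_prod (f : ι → R) (hf : ∀ i j, f i * f j = -(f j * f i)) (x y : ι)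
    (hxy : x ≠ y) :
    ∀ (L : List ι), L.Nodup → x ∈ L → y ∈ L →
      (L.map (f ∘ Equiv.swap x y)).prod = -(L.map f).prod := by
  intro L
  induction L with
  | nil => intro _ h; simp at h
  | cons a t ih =>
    intro hnd hx hy
    have hnd' : t.Nodup := (List.nodup_cons.mp hnd).2
    by_cases hax : a = x
    · subst hax
      have hxt : a ∉ t := (List.nodup_cons.mp hnd).1
      have hyt : y ∈ t := by
        rcases List.mem_cons.mp hy with h | h
        · exact absurd h.symm (by simpa using hxy)
        · exact h
      simp only [List.map_cons, List.prod_cons, Function.comp_apply, Equiv.swap_apply_left]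
      rw [anticomm_replace f hf a y t hnd' hyt hxt]
    · by_cases hay : a = y
      · subst hay
        have hyt : a ∉ t := (List.nodup_cons.mp hnd).1
        have hxt : x ∈ t := by
          rcases List.mem_cons.mp hx with h | h
          · exact absurd h.symm hax
          · exact h
        simp only [List.map_cons, List.prod_cons, Function.comp_apply, Equiv.swap_apply_right]
        rw [Equiv.swap_comm x a]
        rw [anticomm_replace f hf a x t hnd' hxt hyt]
      · have hxt : x ∈ t := by
          rcases List.mem_cons.mp hx with h | h
          · exact absurd h.symm hax
          · exact h
        have hyt : y ∈ t := by
          rcases List.mem_cons.mp hy with h | h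
          · exact absurd h.symm hay
          · exact h
        have hsa : (Equiv.swap x y) a = a := Equiv.swap_apply_of_ne_of_ne hax hay
        simp only [List.map_cons, List.prod_cons, Function.comp_apply, hsa]
        rw [ih hnd' hxt hyt, mul_neg]

lemma ofFn_comp_swap {n : ℕ} (f : Fin n → R) (hf : ∀ i j, f i * f j = -(f j * f i))
    {x y : Fin n} (hxy : x ≠ y) :
    (List.ofFn (f ∘ Equiv.swap x y)).prod = -(List.ofFn f).prod := by
  rw [List.ofFn_eq_map, List.ofFn_eq_map]
  exact anticomm_swap_prod f hf x y hxy _ (List.nodup_finRange n)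
    (List.mem_finRange x) (List.mem_finRange y)

lemma ofFn_comp_perm {n : ℕ} (σ : Equiv.Perm (Fin n)) :
    ∀ (f : Fin n → R), (∀ i j, f i * f j = -(f j * f i)) →
      (List.ofFn (f ∘ σ)).prod = ((Equiv.Perm.sign σ : ℤ)) • (List.ofFn f).prod := by
  refine Equiv.Perm.swap_induction_on
    (motive := fun σ => ∀ (f : Fin n → R), (∀ i j, f i * f j = -(f j * f i)) →
      (List.ofFn (f ∘ σ)).prod = ((Equiv.Perm.sign σ : ℤ)) • (List.ofFn f).prod)
    σ ?_ ?_
  · intro f _; simp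
  · intro τ x y hxy ih f hf
    have h1 : (f ∘ ⇑(Equiv.swap x y * τ)) = (f ∘ Equiv.swap x y) ∘ τ := by
      funext i; simp [Equiv.Perm.mul_apply]
    have hg : ∀ i j, (f ∘ Equiv.swap x y) i * (f ∘ Equiv.swap x y) j
        = -((f ∘ Equiv.swap x y) j * (f ∘ Equiv.swap x y) i) := fun i j => hf _ _
    rw [h1, ih _ hg, ofFn_comp_swap f hf hxy, Equiv.Perm.sign_mul,
      Equiv.Perm.sign_swap hxy]
    simp [neg_smul, smul_neg]

end AntiComm

section PermStruct

variable {n : ℕ}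

/-- Lift a block of naturals to `Fin n`. -/
def toFins (n : ℕ) (b : List ℕ) : List (Fin n) :=
  b.filterMap (fun m => if h : m < n then some (⟨m, h⟩ : Fin n) else none)

lemma permOfList_eq (L : List ℕ) :
    Paper.permOfList n L
      = ((Paper.blocksAux L 0).map (fun b => (toFins n b).formPerm)).prod := rfl

lemma blocksAux_flatten : ∀ (L : List ℕ) (o : ℕ),
    (Paper.blocksAux L o).flatten = List.range' o L.sum := by
  intro L
  induction L with
  | nil => intro o; simp [Paper.blocksAux]
  | cons k t ih =>
    intro o
    show (((List.range k).map (o + ·)) :: Paper.blocksAux t (o + k)).flatten = _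
    rw [List.flatten_cons, ih (o + k)]
    have h1 : (List.range k).map (o + ·) = List.range' o k := by
      rw [List.range'_eq_map_range]
    rw [h1]
    have := List.range'_append (s := o) (m := k) (n := t.sum) (step := 1)
    simp only [one_mul] at this
    rw [this]
    simp [List.sum_cons, Nat.add_comm]

lemma blocksAux_map_length : ∀ (L : List ℕ) (o : ℕ),
    (Paper.blocksAux L o).map List.length = L := by
  intro L
  induction L with
  | nil => intro o; simp [Paper.blocksAux]
  | cons k t ih =>
    intro o
    show (((List.range k).map (o + ·)) :: Paper.blocksAux t (o + k)).map List.length = _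
    simp [ih (o + k)]

lemma mem_toFins_val {b : List ℕ} {x : Fin n} (hx : x ∈ toFins n b) : (x : ℕ) ∈ b := by
  obtain ⟨m, hm, he⟩ := List.mem_filterMap.mp hx
  by_cases h : m < n
  · rw [dif_pos h] at he
    obtain rfl : (⟨m, h⟩ : Fin n) = x := Option.some_injective _ he
    exact hm
  · rw [dif_neg h] at he; exact absurd he (by simp)

lemma toFins_map_val {b : List ℕ} (hb : ∀ m ∈ b, m < n) :
    (toFins n b).map Fin.val = b := by
  induction b with
  | nil => simp [toFins]
  | cons a t ih =>
    have ha : a < n := hb a (List.mem_cons_self)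
    have : toFins n (a :: t) = (⟨a, ha⟩ : Fin n) :: toFins n t := by
      simp [toFins, List.filterMap_cons, dif_pos ha]
    rw [this, List.map_cons, ih (fun m hm => hb m (List.mem_cons_of_mem _ hm))]

lemma mem_toFins {b : List ℕ} (hb : ∀ m ∈ b, m < n) (x : Fin n) :
    x ∈ toFins n b ↔ (x : ℕ) ∈ b := by
  constructor
  · exact mem_toFins_val
  · intro hx
    rw [← toFins_map_val hb] at hx
    obtain ⟨y, hy, he⟩ := List.mem_map.mp hx
    rwa [show y = x from Fin.ext he] at hy

lemma toFins_length {b : List ℕ} (hb : ∀ m ∈ b, m < n) :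
    (toFins n b).length = b.length := by
  conv_rhs => rw [← toFins_map_val hb]
  simp

lemma toFins_nodup {b : List ℕ} (hb : ∀ m ∈ b, m < n) (hnd : b.Nodup) :
    (toFins n b).Nodup := by
  have : ((toFins n b).map Fin.val).Nodup := by rwa [toFins_map_val hb]
  exact this.of_map _

lemma prod_apply_not_mem : ∀ (bs : List (List ℕ)) (x : Fin n),
    (∀ b ∈ bs, (x : ℕ) ∉ b) →
    ((bs.map (fun b => (toFins n b).formPerm)).prod) x = x := by
  intro bs
  induction bs with
  | nil => intro x _; simp
  | cons b rest ih =>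
    intro x hx
    rw [List.map_cons, List.prod_cons, Equiv.Perm.mul_apply,
      ih x (fun b' hb' => hx b' (List.mem_cons_of_mem _ hb'))]
    apply List.formPerm_apply_of_notMem
    intro hmem
    exact hx b (List.mem_cons_self) (mem_toFins_val hmem)

lemma prod_apply_mem : ∀ (bs : List (List ℕ)),
    (∀ b ∈ bs, ∀ m ∈ b, m < n) → bs.Pairwise List.Disjoint →
    ∀ b ∈ bs, ∀ x : Fin n, (x : ℕ) ∈ b →
    ((bs.map (fun b => (toFins n b).formPerm)).prod) x = (toFins n b).formPerm x := by
  intro bs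
  induction bs with
  | nil => intro _ _ b hb; simp at hb
  | cons b' rest ih =>
    intro hlt hpw b hb x hx
    have hd : ∀ b'' ∈ rest, List.Disjoint b' b'' := (List.pairwise_cons.mp hpw).1
    have hpw' : rest.Pairwise List.Disjoint := (List.pairwise_cons.mp hpw).2
    rw [List.map_cons, List.prod_cons, Equiv.Perm.mul_apply]
    rcases List.mem_cons.mp hb with rfl | hbr
    · rw [prod_apply_not_mem rest x (fun b'' hb'' hmem => hd b'' hb'' hx hmem)]
    · rw [ih (fun b'' h'' => hlt b'' (List.mem_cons_of_mem _ h'')) hpw' b hbr x hx]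
      set y := (toFins n b).formPerm x with hy
      have hxb : x ∈ toFins n b := (mem_toFins (hlt b hb) x).mpr hx
      have hyb : y ∈ toFins n b := List.formPerm_apply_mem_of_mem hxb
      apply List.formPerm_apply_of_notMem
      intro hmem
      exact hd b hbr (mem_toFins_val hmem) (mem_toFins_val hyb)

lemma formPerm_pow_mem {b : List ℕ} {x : Fin n} (hx : x ∈ toFins n b) (k : ℕ) :
    ((toFins n b).formPerm ^ k) x ∈ toFins n b := by
  induction k with
  | zero => simpa using hx
  | succ k ih =>
    rw [pow_succ', Equiv.Perm.mul_apply]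
    exact List.formPerm_apply_mem_of_mem ih

section WithL
variable {L : List ℕ}

lemma blocks_flatten_eq (hsum : L.sum = n) : (Paper.blocksAux L 0).flatten = List.range n := by
  rw [blocksAux_flatten, hsum, List.range_eq_range']

lemma blocks_lt (hsum : L.sum = n) : ∀ b ∈ Paper.blocksAux L 0, ∀ m ∈ b, m < n := by
  intro b hb m hm
  have : m ∈ (Paper.blocksAux L 0).flatten := List.mem_flatten.mpr ⟨b, hb, hm⟩
  rw [blocks_flatten_eq hsum] at this
  exact List.mem_range.mp this

lemma blocks_nodup_disjoint (hsum : L.sum = n) :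
    (∀ b ∈ Paper.blocksAux L 0, b.Nodup) ∧
      (Paper.blocksAux L 0).Pairwise List.Disjoint := by
  have : (Paper.blocksAux L 0).flatten.Nodup := by
    rw [blocks_flatten_eq hsum]; exact List.nodup_range
  exact List.nodup_flatten.mp this

lemma blocks_cover (hsum : L.sum = n) (x : Fin n) : ∃ b ∈ Paper.blocksAux L 0, (x : ℕ) ∈ b := by
  have : (x : ℕ) ∈ (Paper.blocksAux L 0).flatten := by
    rw [blocks_flatten_eq hsum]; exact List.mem_range.mpr x.isLt
  exact List.mem_flatten.mp this

lemma permOfList_pow_apply (hsum : L.sum = n) {b : List ℕ} (hb : b ∈ Paper.blocksAux L 0)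
    {x : Fin n} (hx : (x : ℕ) ∈ b) (k : ℕ) :
    ((Paper.permOfList n L) ^ k) x = ((toFins n b).formPerm ^ k) x := by
  induction k with
  | zero => rfl
  | succ k ih =>
    rw [pow_succ', pow_succ', Equiv.Perm.mul_apply, Equiv.Perm.mul_apply, ih, permOfList_eq]
    have hxb : x ∈ toFins n b := (mem_toFins (blocks_lt hsum b hb) x).mpr hx
    have hyb : ((toFins n b).formPerm ^ k) x ∈ toFins n b := formPerm_pow_mem hxb k
    exact prod_apply_mem _ (blocks_lt hsum) (blocks_nodup_disjoint hsum).2 b hb _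
      (mem_toFins_val hyb)

lemma sameCycle_of_same_block (hsum : L.sum = n) {b : List ℕ} (hb : b ∈ Paper.blocksAux L 0)
    {x y : Fin n} (hx : (x : ℕ) ∈ b) (hy : (y : ℕ) ∈ b) :
    (Paper.permOfList n L).SameCycle x y := by
  have hlt := blocks_lt hsum b hb
  have hxb : x ∈ toFins n b := (mem_toFins hlt x).mpr hx
  have hyb : y ∈ toFins n b := (mem_toFins hlt y).mpr hy
  obtain ⟨i, hi, hix⟩ := List.mem_iff_getElem.mp hxb
  obtain ⟨j, hj, hjy⟩ := List.mem_iff_getElem.mp hyb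
  set len := (toFins n b).length with hlen
  have hndb : (toFins n b).Nodup :=
    toFins_nodup hlt ((blocks_nodup_disjoint hsum).1 b hb)
  refine ⟨(((len - i) + j : ℕ) : ℤ), ?_⟩
  rw [zpow_natCast, permOfList_pow_apply hsum hb hx, ← hix,
    List.formPerm_pow_apply_getElem _ hndb _ i hi]
  have : (i + (len - i + j)) % len = j := by
    have h1 : i ≤ len := le_of_lt hi
    have h2 : i + (len - i + j) = len + j := by omega
    rw [h2, Nat.add_mod_left, Nat.mod_eq_of_lt hj]
  convert hjy using 2

lemma orbit_eq_block (hsum : L.sum = n) {b : List ℕ} (hb : b ∈ Paper.blocksAux L 0)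
    {x : Fin n} (hx : (x : ℕ) ∈ b) :
    {y : Fin n | (Paper.permOfList n L).SameCycle x y} = {y : Fin n | (y : ℕ) ∈ b} := by
  ext y
  simp only [Set.mem_setOf_eq]
  constructor
  · intro h
    obtain ⟨i, _, _, hi⟩ := Equiv.Perm.SameCycle.exists_pow_eq _ h
    rw [permOfList_pow_apply hsum hb hx] at hi
    have hxb : x ∈ toFins n b := (mem_toFins (blocks_lt hsum b hb) x).mpr hx
    rw [← hi]
    exact mem_toFins_val (formPerm_pow_mem hxb i)
  · intro h
    exact sameCycle_of_same_block hsum hb hx h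

lemma block_ncard (hsum : L.sum = n) {b : List ℕ} (hb : b ∈ Paper.blocksAux L 0) :
    {y : Fin n | (y : ℕ) ∈ b}.ncard = b.length := by
  have hlt := blocks_lt hsum b hb
  have hnd := (blocks_nodup_disjoint hsum).1 b hb
  have hset : {y : Fin n | (y : ℕ) ∈ b} = ↑(toFins n b).toFinset := by
    ext y
    simp only [Set.mem_setOf_eq, Finset.coe_sort_coe, List.coe_toFinset, Set.mem_setOf_eq]
    exact (mem_toFins hlt y).symm
  rw [hset, Set.ncard_coe_finset, List.toFinset_card_of_nodup (toFins_nodup hlt hnd),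
    toFins_length hlt]

lemma block_eq_of_length_eq (hnd : L.Nodup) {b b' : List ℕ}
    (hb : b ∈ Paper.blocksAux L 0) (hb' : b' ∈ Paper.blocksAux L 0)
    (hl : b.length = b'.length) : b = b' := by
  obtain ⟨i, hi, hib⟩ := List.mem_iff_getElem.mp hb
  obtain ⟨j, hj, hjb⟩ := List.mem_iff_getElem.mp hb'
  have hlen : (Paper.blocksAux L 0).length = L.length := by
    have := blocksAux_map_length L 0
    simpa using congrArg List.length this
  have hLi : L[i]'(hlen ▸ hi) = b.length := by
    have := blocksAux_map_length L 0
    calc L[i]'(hlen ▸ hi) = ((Paper.blocksAux L 0).map List.length)[i]'(by simpa using hi) := by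
          simp_rw [this]
      _ = b.length := by simp [hib]
  have hLj : L[j]'(hlen ▸ hj) = b'.length := by
    have := blocksAux_map_length L 0
    calc L[j]'(hlen ▸ hj) = ((Paper.blocksAux L 0).map List.length)[j]'(by simpa using hj) := by
          simp_rw [this]
      _ = b'.length := by simp [hjb]
  have hij : i = j := by
    have : L[i]'(hlen ▸ hi) = L[j]'(hlen ▸ hj) := by rw [hLi, hLj, hl]
    exact (List.Nodup.getElem_inj_iff hnd).mp this
  subst hij
  rw [← hib, ← hjb]

lemma sameCycle_of_commute (hsum : L.sum = n) (hnd : L.Nodup) (φ : Equiv.Perm (Fin n))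
    (hc : Commute φ (Paper.permOfList n L)) (x : Fin n) :
    (Paper.permOfList n L).SameCycle x (φ x) := by
  set c := Paper.permOfList n L with hcdef
  obtain ⟨b, hbB, hxb⟩ := blocks_cover hsum x
  obtain ⟨b', hb'B, hyb'⟩ := blocks_cover hsum (φ x)
  have himg : φ '' {y : Fin n | c.SameCycle x y} = {y : Fin n | c.SameCycle (φ x) y} := by
    ext z
    constructor
    · rintro ⟨y, ⟨k, hk⟩, rfl⟩
      refine ⟨k, ?_⟩
      have hcomm : φ * c ^ k = c ^ k * φ := (hc.zpow_right k).symm.eq.symm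
      calc (c ^ k) (φ x) = (c ^ k * φ) x := rfl
        _ = (φ * c ^ k) x := by rw [hcomm]
        _ = φ ((c ^ k) x) := rfl
        _ = φ y := by rw [hk]
    · rintro ⟨k, hk⟩
      refine ⟨(c ^ k) x, ⟨k, rfl⟩, ?_⟩
      have hcomm : φ * c ^ k = c ^ k * φ := (hc.zpow_right k).symm.eq.symm
      calc φ ((c ^ k) x) = (φ * c ^ k) x := rfl
        _ = (c ^ k * φ) x := by rw [hcomm]
        _ = (c ^ k) (φ x) := rfl
        _ = z := hk
  have horb : φ '' {y : Fin n | (y : ℕ) ∈ b} = {y : Fin n | (y : ℕ) ∈ b'} := by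
    rw [← orbit_eq_block hsum hbB hxb, ← orbit_eq_block hsum hb'B hyb', himg]
  have hcard : b.length = b'.length := by
    rw [← block_ncard hsum hbB, ← block_ncard hsum hb'B, ← horb,
      Set.ncard_image_of_injective _ φ.injective]
  have : b = b' := block_eq_of_length_eq hnd hbB hb'B hcard
  subst this
  exact sameCycle_of_same_block hsum hbB hxb hyb'

lemma permOfList_pow_prod (hsum : L.sum = n) : (Paper.permOfList n L) ^ L.prod = 1 := by
  ext x
  obtain ⟨b, hbB, hxb⟩ := blocks_cover hsum x
  rw [permOfList_pow_apply hsum hbB hxb]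
  have hmem : b.length ∈ L := by
    rw [← blocksAux_map_length L 0]
    exact List.mem_map_of_mem hbB
  obtain ⟨q, hq⟩ := List.dvd_prod hmem
  have h1 : (toFins n b).formPerm ^ (toFins n b).length = 1 :=
    List.formPerm_pow_length_eq_one_of_nodup _
      (toFins_nodup (blocks_lt hsum b hbB) ((blocks_nodup_disjoint hsum).1 b hbB))
  rw [toFins_length (blocks_lt hsum b hbB)] at h1
  rw [hq, pow_mul, h1, one_pow]

end WithL

lemma odd_list_prod : ∀ (L : List ℕ), (∀ p ∈ L, Odd p) → Odd L.prod := by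
  intro L
  induction L with
  | nil => intro _; simp
  | cons a t ih =>
    intro h
    rw [List.prod_cons]
    exact (h a (List.mem_cons_self)).mul (ih (fun p hp => h p (List.mem_cons_of_mem _ hp)))

lemma pow_eq_one_of_commute_sameCycle {α : Type*} [Fintype α] [DecidableEq α]
    {c φ : Equiv.Perm α} (hc : Commute φ c) (hs : ∀ x, c.SameCycle x (φ x))
    {M : ℕ} (hM : c ^ M = 1) : φ ^ M = 1 := by
  ext x
  obtain ⟨k, hk⟩ := hs x
  have key : ∀ m : ℕ, (φ ^ m) x = (c ^ ((m : ℤ) * k)) x := by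
    intro m
    induction m with
    | zero => simp
    | succ m ih =>
      have hcomm : φ * c ^ ((m : ℤ) * k) = c ^ ((m : ℤ) * k) * φ :=
        (hc.zpow_right ((m : ℤ) * k)).symm.eq.symm
      calc (φ ^ (m + 1)) x = (φ * φ ^ m) x := by rw [pow_succ']
        _ = φ ((φ ^ m) x) := rfl
        _ = φ ((c ^ ((m : ℤ) * k)) x) := by rw [ih]
        _ = (φ * c ^ ((m : ℤ) * k)) x := rfl
        _ = (c ^ ((m : ℤ) * k) * φ) x := by rw [hcomm]
        _ = (c ^ ((m : ℤ) * k)) (φ x) := rfl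
        _ = (c ^ ((m : ℤ) * k)) ((c ^ k) x) := by rw [← hk]
        _ = (c ^ ((m : ℤ) * k) * c ^ k) x := rfl
        _ = (c ^ (((m + 1 : ℕ) : ℤ) * k)) x := by
            rw [← _root_.zpow_add]
            push_cast
            ring_nf
  rw [key M]
  have : c ^ ((M : ℤ) * k) = 1 := by
    rw [_root_.zpow_mul, zpow_natCast, hM, _root_.one_zpow]
  rw [this]

lemma sign_eq_one_of_commute_permOfList {n : ℕ} {L : List ℕ} (hsum : L.sum = n)
    (hnd : L.Nodup) (hodd : ∀ p ∈ L, Odd p) (φ : Equiv.Perm (Fin n))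
    (hc : Commute φ (Paper.permOfList n L)) : Equiv.Perm.sign φ = 1 := by
  have hφM : φ ^ L.prod = 1 :=
    pow_eq_one_of_commute_sameCycle hc (sameCycle_of_commute hsum hnd φ hc)
      (permOfList_pow_prod hsum)
  have hOdd : Odd L.prod := odd_list_prod L hodd
  have hsign : (Equiv.Perm.sign φ) ^ L.prod = 1 := by
    rw [← map_pow, hφM, _root_.map_one]
  rcases Int.units_eq_one_or (Equiv.Perm.sign φ) with h | h
  · exact h
  · exfalso
    rw [h] at hsign
    have : ((-1 : ℤˣ) : ℤ) ^ L.prod = ((1 : ℤˣ) : ℤ) := by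
      rw [← Units.val_pow_eq_pow_val, hsign]
    simp only [Units.val_neg, Units.val_one] at this
    rw [hOdd.neg_one_pow] at this
    norm_num at this

end PermStruct

section PartitionFacts

variable {n : ℕ} (l : n.Partition)

/-- descending sorted list of parts -/
private def dsort {n : ℕ} (l : n.Partition) : List ℕ := (l.parts.sort (· ≤ ·)).reverse

lemma partAt_eq_getD (i : ℕ) : Paper.partAt l i = (dsort l).getD i 0 := rfl

lemma dsort_sorted : (dsort l).Pairwise (· ≥ ·) := by
  rw [dsort, List.pairwise_reverse]
  exact Multiset.pairwise_sort l.parts (· ≤ ·)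

lemma dsort_sum : (dsort l).sum = n := by
  rw [dsort, List.sum_reverse]
  have h1 : ((l.parts.sort (· ≤ ·) : List ℕ) : Multiset ℕ) = l.parts := Multiset.sort_eq _ _
  calc (l.parts.sort (· ≤ ·)).sum
      = ((l.parts.sort (· ≤ ·) : List ℕ) : Multiset ℕ).sum := (Multiset.sum_coe _).symm
    _ = l.parts.sum := by rw [h1]
    _ = n := l.parts_sum

lemma dsort_length_le : (dsort l).length ≤ n := by
  have h1 : ((l.parts.sort (· ≤ ·) : List ℕ) : Multiset ℕ) = l.parts := Multiset.sort_eq _ _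
  have hlen : (dsort l).length = Multiset.card l.parts := by
    rw [dsort, List.length_reverse]
    have := congrArg Multiset.card h1
    simpa using this
  rw [hlen]
  have h2 : ∀ x ∈ l.parts, 1 ≤ x := fun x hx => l.parts_pos hx
  have := Multiset.card_nsmul_le_sum h2
  simpa [l.parts_sum] using this

lemma partAt_antitone {i j : ℕ} (hij : i ≤ j) : Paper.partAt l j ≤ Paper.partAt l i := by
  rw [partAt_eq_getD, partAt_eq_getD]
  by_cases hj : j < (dsort l).length
  · have hi : i < (dsort l).length := lt_of_le_of_lt hij hj
    rw [List.getD_eq_getElem _ _ hj, List.getD_eq_getElem _ _ hi]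
    rcases eq_or_lt_of_le hij with rfl | hlt
    · exact le_refl _
    · exact (dsort_sorted l).rel_get_of_lt (a := ⟨i, hi⟩) (b := ⟨j, hj⟩) hlt
  · rw [List.getD_eq_default _ _ (le_of_not_gt hj)]
    exact Nat.zero_le _

lemma partAt_le (i : ℕ) : Paper.partAt l i ≤ n := by
  rw [partAt_eq_getD]
  by_cases hi : i < (dsort l).length
  · rw [List.getD_eq_getElem _ _ hi]
    have hmem : (dsort l)[i] ∈ dsort l := List.getElem_mem _
    calc (dsort l)[i] ≤ (dsort l).sum := by
          have hmem' : (dsort l)[i] ∈ ((dsort l) : Multiset ℕ) := by simpa using hmem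
          have := Multiset.single_le_sum (fun x _ => Nat.zero_le x) _ hmem'
          simpa using this
      _ = n := dsort_sum l
  · rw [List.getD_eq_default _ _ (le_of_not_gt hi)]
    exact Nat.zero_le _

private lemma sum_getD_eq_sum : ∀ (t : List ℕ) (N : ℕ), t.length ≤ N →
    ∑ i ∈ Finset.range N, t.getD i 0 = t.sum := by
  intro t
  induction t with
  | nil => intro N _; simp
  | cons a t ih =>
    intro N hN
    cases N with
    | zero => simp at hN
    | succ N =>
      rw [Finset.sum_range_succ']
      simp only [List.getD_cons_succ, List.getD_cons_zero]
      rw [ih N (by simpa using hN), List.sum_cons, Nat.add_comm]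

lemma sum_partAt : ∑ i ∈ Finset.range n, Paper.partAt l i = n := by
  simp only [partAt_eq_getD]
  rw [sum_getD_eq_sum _ _ (dsort_length_le l), dsort_sum]

private lemma count_getD_eq_filter : ∀ (t : List ℕ) (N k : ℕ), t.length ≤ N →
    ∑ i ∈ Finset.range N, (if k < t.getD i 0 then 1 else 0)
      = (t.filter (fun p => decide (k < p))).length := by
  intro t
  induction t with
  | nil => intro N k _; simp
  | cons a t ih =>
    intro N k hN
    cases N with
    | zero => simp at hN
    | succ N =>
      rw [Finset.sum_range_succ']
      simp only [List.getD_cons_succ, List.getD_cons_zero]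
      rw [ih N k (by simpa using hN), List.filter_cons]
      by_cases h : k < a
      · simp [h, Nat.add_comm]
      · simp [h]

lemma conjPartAt_eq_card (k : ℕ) :
    Paper.conjPartAt l k = #((Finset.range n).filter (fun i => k < Paper.partAt l i)) := by
  have h1 : ((l.parts.sort (· ≤ ·) : List ℕ) : Multiset ℕ) = l.parts := Multiset.sort_eq _ _
  have h2 : ((dsort l : List ℕ) : Multiset ℕ) = l.parts := by
    rw [dsort, Multiset.coe_reverse, h1]
  have h3 : Paper.conjPartAt l k = ((dsort l).filter (fun p => decide (k < p))).length := by
    rw [Paper.conjPartAt, ← h2, Multiset.filter_coe]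
    simp
  rw [h3, Finset.card_filter, ← count_getD_eq_filter _ _ _ (dsort_length_le l)]
  rfl

/-- A downward-closed finset of naturals is an initial segment. -/
lemma dc_eq_range (S : Finset ℕ) (h : ∀ j ∈ S, ∀ i ≤ j, i ∈ S) : S = Finset.range S.card := by
  ext m
  simp only [Finset.mem_range]
  constructor
  · intro hm
    have hsub : Finset.range (m + 1) ⊆ S := by
      intro i hi
      exact h m hm i (by simpa [Nat.lt_succ_iff] using hi)
    have := Finset.card_le_card hsub
    simpa using this
  · intro hm
    by_contra hmS
    have hsub : S ⊆ Finset.range m := by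
      intro j hj
      simp only [Finset.mem_range]
      by_contra hjm
      exact hmS (h j hj m (le_of_not_gt hjm))
    have := Finset.card_le_card hsub
    simp only [Finset.card_range] at this
    omega

lemma rank_filter_eq :
    (Finset.range n).filter (fun i => i < Paper.partAt l i) = Finset.range (Paper.rank l) := by
  rw [Paper.rank]
  apply dc_eq_range
  intro j hj i hij
  simp only [Finset.mem_filter, Finset.mem_range] at hj ⊢
  refine ⟨lt_of_le_of_lt hij hj.1, ?_⟩
  calc i ≤ j := hij
    _ < Paper.partAt l j := hj.2
    _ ≤ Paper.partAt l i := partAt_antitone l hij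

lemma lt_partAt_of_lt_rank {k : ℕ} (hk : k < Paper.rank l) : k < n ∧ k < Paper.partAt l k := by
  have : k ∈ (Finset.range n).filter (fun i => i < Paper.partAt l i) := by
    rw [rank_filter_eq]; exact Finset.mem_range.mpr hk
  simpa using this

lemma partAt_le_of_rank_le {k : ℕ} (hk1 : k < n) (hk2 : Paper.rank l ≤ k) :
    Paper.partAt l k ≤ k := by
  by_contra h
  have : k ∈ (Finset.range n).filter (fun i => i < Paper.partAt l i) := by
    simp only [Finset.mem_filter, Finset.mem_range]
    exact ⟨hk1, lt_of_not_ge h⟩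
  rw [rank_filter_eq] at this
  have := Finset.mem_range.mp this
  omega

lemma partition_rank_le : Paper.rank l ≤ n := by
  have : Finset.range (Paper.rank l) ⊆ Finset.range n := by
    rw [← rank_filter_eq]; exact Finset.filter_subset _ _
  simpa using Finset.card_le_card this

end PartitionFacts

section HookFacts

variable {n : ℕ} (l : n.Partition) (hl : Paper.IsSelfConj l)

lemma hookParts_odd : ∀ p ∈ Paper.hookParts l, Odd p := by
  intro p hp
  rw [Paper.hookParts] at hp
  obtain ⟨k, hk, rfl⟩ := List.mem_map.mp hp
  have hkr : k < Paper.rank l := List.mem_range.mp hk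
  have h1 : k < Paper.partAt l k := (lt_partAt_of_lt_rank l hkr).2
  exact ⟨Paper.partAt l k - k - 1, by omega⟩

lemma hookParts_nodup : (Paper.hookParts l).Nodup := by
  rw [Paper.hookParts, List.nodup_map_iff_inj_on (List.nodup_range)]
  intro i hi j hj hij
  rw [List.mem_range] at hi hj
  have h1 : i < Paper.partAt l i := (lt_partAt_of_lt_rank l hi).2
  have h2 : j < Paper.partAt l j := (lt_partAt_of_lt_rank l hj).2
  rcases lt_trichotomy i j with h | h | h
  · have := partAt_antitone l (le_of_lt h)
    omega
  · exact h
  · have := partAt_antitone l (le_of_lt h)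
    omega

private lemma list_sum_map_range (f : ℕ → ℕ) : ∀ (r : ℕ),
    ((List.range r).map f).sum = ∑ i ∈ Finset.range r, f i := by
  intro r
  induction r with
  | zero => simp
  | succ r ih => rw [List.range_succ, List.map_append, List.sum_append,
      Finset.sum_range_succ, ih]; simp

include hl

lemma count_Ico_lt (k : ℕ) (hkr : k < Paper.rank l) :
    #((Finset.Ico (Paper.rank l) n).filter (fun i => k < Paper.partAt l i))
      = Paper.partAt l k - Paper.rank l ∧ Paper.rank l ≤ Paper.partAt l k := by
  set r := Paper.rank l with hr
  have hrn : r ≤ n := partition_rank_le l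
  have hsplit : (Finset.range n).filter (fun i => k < Paper.partAt l i)
      = ((Finset.range r).filter (fun i => k < Paper.partAt l i))
        ∪ ((Finset.Ico r n).filter (fun i => k < Paper.partAt l i)) := by
    rw [← Finset.filter_union, Finset.range_eq_Ico, Finset.range_eq_Ico,
      Finset.Ico_union_Ico_eq_Ico (Nat.zero_le r) hrn]
  have hfull : (Finset.range r).filter (fun i => k < Paper.partAt l i) = Finset.range r := by
    apply Finset.filter_true_of_mem
    intro i hi
    have hir : i < r := Finset.mem_range.mp hi
    have hik : k < Paper.partAt l k := (lt_partAt_of_lt_rank l hkr).2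
    have hii : i < Paper.partAt l i := (lt_partAt_of_lt_rank l hir).2
    rcases le_or_gt i k with h | h
    · calc k < Paper.partAt l k := hik
        _ ≤ Paper.partAt l i := partAt_antitone l h
    · omega
  have hdisj : Disjoint ((Finset.range r).filter (fun i => k < Paper.partAt l i))
      ((Finset.Ico r n).filter (fun i => k < Paper.partAt l i)) := by
    apply Finset.disjoint_filter_filter
    rw [Finset.range_eq_Ico]
    exact Finset.Ico_disjoint_Ico_consecutive 0 r n
  have hcount : Paper.partAt l k
      = #((Finset.range n).filter (fun i => k < Paper.partAt l i)) := by
    rw [← conjPartAt_eq_card]; exact hl k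
  rw [hsplit, Finset.card_union_of_disjoint hdisj, hfull, Finset.card_range] at hcount
  constructor
  · omega
  · omega

lemma count_Ico_ge (k : ℕ) (hk : k < n) (hkr : Paper.rank l ≤ k) :
    #((Finset.Ico (Paper.rank l) n).filter (fun i => k < Paper.partAt l i)) = 0 := by
  rw [Finset.card_eq_zero, Finset.filter_eq_empty_iff]
  intro i hi
  rw [Finset.mem_Ico] at hi
  intro hlt
  have h1 : Paper.partAt l i ≤ i := partAt_le_of_rank_le l hi.2 hi.1
  have h2 : Paper.partAt l k ≤ k := partAt_le_of_rank_le l hk hkr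
  rcases le_or_gt k i with h | h
  · have := partAt_antitone l h
    omega
  · omega

lemma sum_Ico_partAt :
    ∑ i ∈ Finset.Ico (Paper.rank l) n, Paper.partAt l i
      = ∑ k ∈ Finset.range (Paper.rank l), (Paper.partAt l k - Paper.rank l) := by
  set r := Paper.rank l with hr
  have hrn : r ≤ n := partition_rank_le l
  have hfix : ∀ i, Paper.partAt l i
      = ∑ k ∈ Finset.range n, (if k < Paper.partAt l i then 1 else 0) := by
    intro i
    rw [← Finset.card_filter]
    have : (Finset.range n).filter (fun k => k < Paper.partAt l i)
        = Finset.range (Paper.partAt l i) := by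
      ext m
      simp only [Finset.mem_filter, Finset.mem_range]
      have := partAt_le l i
      omega
    rw [this, Finset.card_range]
  calc ∑ i ∈ Finset.Ico r n, Paper.partAt l i
      = ∑ i ∈ Finset.Ico r n, ∑ k ∈ Finset.range n,
          (if k < Paper.partAt l i then 1 else 0) := by
        exact Finset.sum_congr rfl (fun i _ => hfix i)
    _ = ∑ k ∈ Finset.range n, ∑ i ∈ Finset.Ico r n,
          (if k < Paper.partAt l i then 1 else 0) := Finset.sum_comm
    _ = ∑ k ∈ Finset.range n,
          #((Finset.Ico r n).filter (fun i => k < Paper.partAt l i)) := by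
        exact Finset.sum_congr rfl (fun k _ => (Finset.card_filter _ _).symm)
    _ = ∑ k ∈ Finset.range n, (if k < r then Paper.partAt l k - r else 0) := by
        apply Finset.sum_congr rfl
        intro k hk
        rw [Finset.mem_range] at hk
        by_cases hkr : k < r
        · rw [if_pos hkr, (count_Ico_lt l hl k hkr).1]
        · rw [if_neg hkr, count_Ico_ge l hl k hk (le_of_not_gt hkr)]
    _ = ∑ k ∈ (Finset.range n).filter (fun k => k < r),
          (Paper.partAt l k - r) := (Finset.sum_filter _ _).symm
    _ = ∑ k ∈ Finset.range r, (Paper.partAt l k - r) := by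
        congr 1
        ext m
        simp only [Finset.mem_filter, Finset.mem_range]
        omega

lemma hookParts_sum : (Paper.hookParts l).sum = n := by
  set r := Paper.rank l with hr
  have hrn : r ≤ n := partition_rank_le l
  have hsq : ∑ k ∈ Finset.range r, (2 * k + 1) = r * r := by
    induction r with
    | zero => simp
    | succ r ih => rw [Finset.sum_range_succ, ih]; ring
  have hge_r : ∀ k < r, r ≤ Paper.partAt l k := fun k hk => (count_Ico_lt l hl k hk).2
  have hge_k : ∀ k < r, k < Paper.partAt l k := fun k hk => (lt_partAt_of_lt_rank l hk).2
  set S := ∑ k ∈ Finset.range r, Paper.partAt l k with hS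
  set T := ∑ k ∈ Finset.range r, (Paper.partAt l k - r) with hT
  set H := (Paper.hookParts l).sum with hH
  have e1 : n = S + T := by
    have hsplitsum : ∑ i ∈ Finset.range n, Paper.partAt l i
        = S + ∑ i ∈ Finset.Ico r n, Paper.partAt l i := by
      rw [hS, Finset.range_eq_Ico, Finset.range_eq_Ico, ← Finset.sum_Ico_consecutive _
        (Nat.zero_le r) hrn]
    rw [← sum_partAt l, hsplitsum, sum_Ico_partAt l hl, ← hT]
  have hconst : ∑ _k ∈ Finset.range r, r = r * r := by
    simp [Finset.sum_const, Finset.card_range, Nat.smul_one_eq_cast]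
  have e2 : T + r * r = S := by
    rw [hT, hS, ← hconst, ← Finset.sum_add_distrib]
    apply Finset.sum_congr rfl
    intro k hk
    rw [Finset.mem_range] at hk
    have h1 := hge_r k hk
    have h2 := hge_k k hk
    omega
  have e3 : H + r * r = 2 * S := by
    rw [hH, Paper.hookParts, list_sum_map_range, hS, ← hsq, ← Finset.sum_add_distrib,
      Finset.mul_sum]
    apply Finset.sum_congr rfl
    intro k hk
    rw [Finset.mem_range] at hk
    have h2 := hge_k k hk
    omega
  have hq : ∃ q, q = r * r := ⟨r * r, rfl⟩
  obtain ⟨q, hqe⟩ := hq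
  rw [← hqe] at e2 e3
  omega

end HookFacts


section TwCharConj

lemma twChar_conj {n : ℕ} (l : n.Partition) (hl : Paper.IsSelfConj l)
    (σ π : Equiv.Perm (Fin n)) :
    Paper.twChar l (σ * π * σ⁻¹) = ((Equiv.Perm.sign σ : ℤ) : ℂ) * Paper.twChar l π := by
  classical
  by_cases hπ : ∃ τ : Equiv.Perm (Fin n),
      π = τ * Paper.permOfList n (Paper.hookParts l) * τ⁻¹
  · have hσπ : ∃ τ : Equiv.Perm (Fin n),
        σ * π * σ⁻¹ = τ * Paper.permOfList n (Paper.hookParts l) * τ⁻¹ := by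
      obtain ⟨τ, hτ⟩ := hπ
      exact ⟨σ * τ, by rw [hτ]; group⟩
    rw [Paper.twChar, Paper.twChar, dif_pos hσπ, dif_pos hπ]
    set c := Paper.permOfList n (Paper.hookParts l) with hc
    set τ₂ := hσπ.choose with hτ₂
    set τ₁ := hπ.choose with hτ₁
    have spec2 : σ * π * σ⁻¹ = τ₂ * c * τ₂⁻¹ := hσπ.choose_spec
    have spec1 : π = τ₁ * c * τ₁⁻¹ := hπ.choose_spec
    set φ := τ₂⁻¹ * (σ * τ₁) with hφ
    have key : φ * c * φ⁻¹ = c := by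
      have h1 : σ * (τ₁ * c * τ₁⁻¹) * σ⁻¹ = τ₂ * c * τ₂⁻¹ := by rw [← spec1]; exact spec2
      calc φ * c * φ⁻¹ = τ₂⁻¹ * (σ * (τ₁ * c * τ₁⁻¹) * σ⁻¹) * τ₂ := by rw [hφ]; group
        _ = τ₂⁻¹ * (τ₂ * c * τ₂⁻¹) * τ₂ := by rw [h1]
        _ = c := by group
    have hcomm : Commute φ c := by
      have h : φ * c = c * φ := by
        conv_rhs => rw [← key]
        group
      exact h
    have hsign : Equiv.Perm.sign φ = 1 :=
      sign_eq_one_of_commute_permOfList (hookParts_sum l hl) (hookParts_nodup l)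
        (hookParts_odd l) φ hcomm
    have hs2 : Equiv.Perm.sign τ₂ = Equiv.Perm.sign σ * Equiv.Perm.sign τ₁ := by
      have h2 : (Equiv.Perm.sign τ₂)⁻¹ *
          (Equiv.Perm.sign σ * Equiv.Perm.sign τ₁) = 1 := by
        rw [← map_inv, ← _root_.map_mul, ← _root_.map_mul]
        exact hsign
      exact inv_mul_eq_one.mp h2
    have hcast : ((Equiv.Perm.sign τ₂ : ℤ) : ℂ)
        = ((Equiv.Perm.sign σ : ℤ) : ℂ) * ((Equiv.Perm.sign τ₁ : ℤ) : ℂ) := by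
      rw [hs2]; push_cast; ring
    rw [hcast]; ring
  · have hσπ : ¬ ∃ τ : Equiv.Perm (Fin n),
        σ * π * σ⁻¹ = τ * Paper.permOfList n (Paper.hookParts l) * τ⁻¹ := by
      rintro ⟨τ, hτ⟩
      apply hπ
      refine ⟨σ⁻¹ * τ, ?_⟩
      have : π = σ⁻¹ * (σ * π * σ⁻¹) * σ := by group
      rw [this, hτ]; group
    rw [Paper.twChar, Paper.twChar, dif_neg hσπ, dif_neg hπ, mul_zero]

end TwCharConj

/-- For a matrix with anticommuting entries, the twisted immanant is invariant under
simultaneous row/column permutations. -/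
theorem twImm_perm_anticommute {R : Type*} [Ring R] [Algebra ℂ R] {n : ℕ}
    (l : n.Partition) (hl : Paper.IsSelfConj l)
    (A : Matrix (Fin n) (Fin n) R) (hA : Paper.PairwiseAnticommute A)
    (σ : Equiv.Perm (Fin n)) :
    Paper.rowImm (Paper.twChar l) (A.submatrix σ σ) =
      Paper.rowImm (Paper.twChar l) A := by
  classical
  unfold Paper.rowImm
  have key : ∀ τ : Equiv.Perm (Fin n),
      Paper.twChar l τ • (List.ofFn fun i => (A.submatrix σ σ) i (τ i)).prod
      = Paper.twChar l (σ * τ * σ⁻¹) •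
          (List.ofFn fun i => A i ((σ * τ * σ⁻¹) i)).prod := by
    intro τ
    have hfn : (fun i => (A.submatrix σ σ) i (τ i))
        = (fun i => A i ((σ * τ * σ⁻¹) i)) ∘ σ := by
      funext i
      simp [Matrix.submatrix_apply, Equiv.Perm.mul_apply]
    have hanti : ∀ i j, (fun i => A i ((σ * τ * σ⁻¹) i)) i * (fun i => A i ((σ * τ * σ⁻¹) i)) j
        = -((fun i => A i ((σ * τ * σ⁻¹) i)) j * (fun i => A i ((σ * τ * σ⁻¹) i)) i) :=
      fun i j => hA _ _ _ _
    rw [hfn, ofFn_comp_perm σ _ hanti, twChar_conj l hl σ τ]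
    rw [← Int.cast_smul_eq_zsmul ℂ, smul_smul, mul_comm]
  rw [Finset.sum_congr rfl (fun τ _ => key τ)]
  exact Fintype.sum_equiv
    ((Equiv.mulLeft σ).trans (Equiv.mulRight σ⁻¹)) _ _ (fun τ => rfl)
end

section
/- For any g ∈ GL_N(ℂ), any N×N matrix A over an associative ℂ-algebra (entries not assumed to commute), and any self-conjugate partition λ of n: imm^{*λ}_n (gAg^{-1}) = imm^{*λ}_n A. More generally, imm^{*λ}_n (gA) = imm^{*λ}_n (Ag) for any complex N×N matrix g. -/
open Equiv Finset Matrix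
open scoped BigOperators Classical Kronecker

section Aux

variable {R : Type*} [Ring R] [Algebra ℂ R]

/-- Expanding an ordered product of sums. -/
lemma listOfFn_prod_sum {S : Type*} [Semiring S] {κ : Type*} [Fintype κ] :
    ∀ (k : ℕ) (F : Fin k → κ → S),
      (List.ofFn (fun s => ∑ c : κ, F s c)).prod =
        ∑ K : Fin k → κ, (List.ofFn (fun s => F s (K s))).prod
  | 0, F => by simp
  | (k + 1), F => by
    have hR : ∀ K : Fin (k + 1) → κ,
        (List.ofFn (fun s => F s (K s))).prod =
          F 0 (K 0) * (List.ofFn (fun s : Fin k => F s.succ (K s.succ))).prod := by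
      intro K
      rw [List.ofFn_succ, List.prod_cons]
    rw [List.ofFn_succ, List.prod_cons,
      listOfFn_prod_sum k (fun s c => F s.succ c), Finset.sum_mul_sum,
      Fintype.sum_equiv (Fin.consEquiv (fun _ : Fin (k + 1) => κ)).symm
        (fun K => (List.ofFn (fun s => F s (K s))).prod)
        (fun p => F 0 p.1 * (List.ofFn (fun s : Fin k => F s.succ (p.2 s))).prod)
        (fun K => hR K), Fintype.sum_prod_type]

/-- Pulling scalars out of an ordered product. -/
lemma listOfFn_prod_smul :
    ∀ (k : ℕ) (c : Fin k → ℂ) (a : Fin k → R),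
      (List.ofFn (fun s => c s • a s)).prod = (∏ s, c s) • (List.ofFn a).prod
  | 0, c, a => by simp
  | (k + 1), c, a => by
    rw [List.ofFn_succ, List.prod_cons,
      listOfFn_prod_smul k (fun s => c s.succ) (fun s => a s.succ),
      smul_mul_smul_comm, ← Fin.prod_univ_succ, List.ofFn_succ, List.prod_cons]

/-- Expansion of the ordered product of entries of `g·A` (scalar `g`). -/
lemma gA_prod_expand {k N : ℕ} (g : Matrix (Fin N) (Fin N) ℂ)
    (A : Matrix (Fin N) (Fin N) R) (I J : Fin k → Fin N) :
    (List.ofFn (fun s => ((g.map (algebraMap ℂ R)) * A) (I s) (J s))).prod =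
      ∑ K : Fin k → Fin N,
        (∏ s, g (I s) (K s)) • (List.ofFn (fun s => A (K s) (J s))).prod := by
  have h1 : ∀ s : Fin k, ((g.map (algebraMap ℂ R)) * A) (I s) (J s) =
      ∑ c : Fin N, g (I s) c • A c (J s) := by
    intro s
    rw [Matrix.mul_apply]
    exact Finset.sum_congr rfl fun c _ => by rw [Matrix.map_apply, Algebra.smul_def]
  simp_rw [h1]
  rw [listOfFn_prod_sum k (fun s c => g (I s) c • A c (J s))]
  exact Finset.sum_congr rfl fun K _ =>
    listOfFn_prod_smul k (fun s => g (I s) (K s)) (fun s => A (K s) (J s))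

/-- Expansion of the ordered product of entries of `A·g` (scalar `g`). -/
lemma Ag_prod_expand {k N : ℕ} (g : Matrix (Fin N) (Fin N) ℂ)
    (A : Matrix (Fin N) (Fin N) R) (I J : Fin k → Fin N) :
    (List.ofFn (fun s => (A * (g.map (algebraMap ℂ R))) (I s) (J s))).prod =
      ∑ K : Fin k → Fin N,
        (∏ s, g (K s) (J s)) • (List.ofFn (fun s => A (I s) (K s))).prod := by
  have h1 : ∀ s : Fin k, (A * (g.map (algebraMap ℂ R))) (I s) (J s) =
      ∑ c : Fin N, g c (J s) • A (I s) c := by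
    intro s
    rw [Matrix.mul_apply]
    exact Finset.sum_congr rfl fun c _ => by
      rw [Matrix.map_apply, Algebra.smul_def, ← Algebra.commutes]
  simp_rw [h1]
  rw [listOfFn_prod_sum k (fun s c => g c (J s) • A (I s) c)]
  exact Finset.sum_congr rfl fun K _ =>
    listOfFn_prod_smul k (fun s => g (K s) (J s)) (fun s => A (I s) (K s))

/-- The fundamental identity: `imm (gA) = imm (Ag)` for any weight `χ`. -/
lemma immSum_mul_comm {k N : ℕ} (χ : Equiv.Perm (Fin k) → ℂ)
    (g : Matrix (Fin N) (Fin N) ℂ) (A : Matrix (Fin N) (Fin N) R) :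
    Paper.immSum χ ((g.map (algebraMap ℂ R)) * A) =
      Paper.immSum χ (A * (g.map (algebraMap ℂ R))) := by
  unfold Paper.immSum Paper.rowImm
  congr 1
  rw [Finset.sum_comm, Finset.sum_comm (γ := Fin k → Fin N)]
  refine Finset.sum_congr rfl fun τ _ => ?_
  simp only [Matrix.submatrix_apply]
  simp_rw [gA_prod_expand g A, Ag_prod_expand g A, Finset.smul_sum,
    ← Fintype.sum_prod_type']
  refine Fintype.sum_equiv
    ⟨fun p => (p.2, p.1 ∘ τ), fun p => (p.2 ∘ τ.symm, p.1),
      fun p => by ext s <;> simp, fun p => by ext s <;> simp⟩ _ _ fun p => ?_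
  simp only [Equiv.coe_fn_mk, Function.comp_apply]
  congr 2
  exact (Equiv.prod_comp τ (fun s => g (p.1 s) (p.2 s))).symm

end Aux

/-- `imm^{*λ}_n` is invariant under conjugation by `GL_N(ℂ)`; more generally
`imm^{*λ}_n (gA) = imm^{*λ}_n (Ag)` for every complex matrix `g`. -/
theorem twImmSum_conj_invariant {R : Type*} [Ring R] [Algebra ℂ R] {n N : ℕ}
    (l : n.Partition) (hl : Paper.IsSelfConj l) (A : Matrix (Fin N) (Fin N) R) :
    (∀ g : GL (Fin N) ℂ,
      Paper.immSum (Paper.twChar l)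
        (((g : Matrix (Fin N) (Fin N) ℂ).map (algebraMap ℂ R)) * A *
          (((↑(g⁻¹) : Matrix (Fin N) (Fin N) ℂ)).map (algebraMap ℂ R))) =
      Paper.immSum (Paper.twChar l) A) ∧
    (∀ g : Matrix (Fin N) (Fin N) ℂ,
      Paper.immSum (Paper.twChar l) ((g.map (algebraMap ℂ R)) * A) =
      Paper.immSum (Paper.twChar l) (A * (g.map (algebraMap ℂ R)))) := by
  constructor
  · intro g
    rw [mul_assoc, immSum_mul_comm, mul_assoc, ← Matrix.map_mul]
    have h : (↑(g⁻¹) : Matrix (Fin N) (Fin N) ℂ) * (↑g : Matrix (Fin N) (Fin N) ℂ) = 1 :=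
      g.inv_mul
    rw [h, Matrix.map_one _ (map_zero _) (map_one _), mul_one]
  · intro g
    exact immSum_mul_comm _ g A
end

section
/- If A is an N×N matrix whose entries pairwise anticommute (each entry squares to zero), then tr(A^{2k}) = 0 for every positive integer k. -/
open Equiv Finset Matrix
open scoped BigOperators Classical Kronecker

private theorem entry_pow_anticommute {R : Type*} [Ring R] {N : ℕ}
    (A : Matrix (Fin N) (Fin N) R) (hA : Paper.PairwiseAnticommute A) (m : ℕ) :
    ∀ i j p q, A i j * (A ^ m) p q = (-1 : R) ^ m * ((A ^ m) p q * A i j) := by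
  induction m with
  | zero =>
    intro i j p q
    simp only [pow_zero, Matrix.one_apply, one_mul]
    split <;> simp
  | succ m ih =>
    intro i j p q
    rw [pow_succ, Matrix.mul_apply, Finset.mul_sum, Finset.sum_mul, Finset.mul_sum]
    refine Finset.sum_congr rfl fun r _ => ?_
    calc A i j * ((A ^ m) p r * A r q)
        = (A i j * (A ^ m) p r) * A r q := by rw [mul_assoc]
      _ = ((-1:R)^m * ((A ^ m) p r * A i j)) * A r q := by rw [ih]
      _ = (-1:R)^m * ((A ^ m) p r * (A i j * A r q)) := by
          rw [mul_assoc, mul_assoc]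
      _ = (-1:R)^m * ((A ^ m) p r * (-(A r q * A i j))) := by rw [hA i j r q]
      _ = (-1:R)^(m+1) * ((A ^ m) p r * A r q * A i j) := by
          simp [pow_succ, mul_neg, neg_mul, mul_assoc]

/-- For a matrix with anticommuting entries, all even-power traces vanish. -/
theorem trace_even_power_eq_zero {R : Type*} [Ring R] [Algebra ℂ R] {N : ℕ}
    (A : Matrix (Fin N) (Fin N) R) (hA : Paper.PairwiseAnticommute A)
    (k : ℕ) (hk : 0 < k) :
    Matrix.trace (A ^ (2 * k)) = 0 := by
  obtain ⟨m, hm, hmodd⟩ : ∃ m, 2 * k = m + 1 ∧ Odd m :=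
    ⟨2 * k - 1, by omega, ⟨k - 1, by omega⟩⟩
  rw [hm]
  set T : R := Matrix.trace (A ^ (m + 1)) with hT
  have hneg : T = -T := by
    have h1 : T = Matrix.trace (A * A ^ m) := by rw [hT, pow_succ']
    have h2 : Matrix.trace (A * A ^ m) = - Matrix.trace (A ^ m * A) := by
      rw [Matrix.trace, Matrix.trace]
      rw [← Finset.sum_neg_distrib]
      simp only [Matrix.diag_apply, Matrix.mul_apply]
      rw [Finset.sum_comm]
      refine Finset.sum_congr rfl fun i _ => ?_
      rw [← Finset.sum_neg_distrib]
      refine Finset.sum_congr rfl fun j _ => ?_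
      rw [entry_pow_anticommute A hA m j i i j, Odd.neg_one_pow hmodd,
        neg_one_mul]
    have h3 : Matrix.trace (A ^ m * A) = T := by rw [← pow_succ]
    calc T = - Matrix.trace (A ^ m * A) := h1.trans h2
      _ = -T := by rw [h3]
  have hsum : T + T = 0 := by nth_rewrite 1 [hneg]; exact neg_add_cancel T
  have h2T : (2 : ℂ) • T = 0 := by rw [two_smul]; exact hsum
  calc T = ((2 : ℂ)⁻¹ * 2) • T := by norm_num
    _ = (2 : ℂ)⁻¹ • ((2 : ℂ) • T) := by rw [smul_smul]
    _ = 0 := by rw [h2T, smul_zero]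
end
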